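/- The ℤ/2-cohomology obstruction: for the lattice map ℤ → ℤ^{n+1}, 1 ↦ (1,…,1), with the swap involution on the last two coordinates acting trivially on the source, the connecting map in group cohomology H⁰(ℤ/2, Λ ⊗ ℝ/ℤ) → H¹(ℤ/2, ℝ/ℤ) (from the short exact sequence 0 → ℝ/ℤ → (ℝ/ℤ)^{n+1} → Λ ⊗ ℝ/ℤ → 0 of ℤ/2-modules) is zero if n > 1 and surjective onto ℤ/2 if n = 1. -/

import Mathlib

/-! In the cocycle description a class of H⁰(ℤ/2, Λ ⊗ ℝ/ℤ) is represented by
y ∈ (ℝ/ℤ)^{n+1} with σy − y = const c diagonal, and the connecting map sends it to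
c ∈ ℝ/ℤ[2] ≅ H¹(ℤ/2, ℝ/ℤ). If `n > 1` the swap fixes coordinate `0`, where `σy − y`
vanishes, so `c = 0`. If `n = 1`, then `σ(a, b) − (a, b) = (b − a, a − b)`, which is the
constant `c` for `(a, b) = (0, c)` exactly because `−c = c`. -/

noncomputable section

abbrev Circle1 : Type := AddCircle (1 : ℝ)

/-- The ℤ/2-action: swapping the last two coordinates of (ℝ/ℤ)^{n+1}. -/
def swapLastS (n : ℕ) : (Fin (n + 1) → Circle1) →ₗ[ℤ] (Fin (n + 1) → Circle1) :=
  LinearMap.funLeft ℤ Circle1 (Equiv.swap ⟨n - 1, by omega⟩ ⟨n, by omega⟩)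

theorem eq_zero_of_comp_sub_eq_const {ι M : Type*} [AddGroup M] {f : ι → ι} {i : ι}
    (hi : f i = i) {y : ι → M} {c : M} (h : y ∘ f - y = fun _ => c) : c = 0 := by
  simpa [hi] using (congrFun h i).symm

theorem comp_swap_sub_eq_const_of_two_zsmul_eq_zero {M : Type*} [AddCommGroup M] {c : M}
    (hc : (2 : ℤ) • c = 0) : ![0, c] ∘ Equiv.swap 0 1 - ![0, c] = fun _ => c := by
  have hneg : -c = c := neg_eq_of_add_eq_zero_left (by rwa [two_zsmul] at hc)
  funext i
  fin_cases i <;> simp [hneg]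

theorem stmt17_general (n : ℕ) :
    -- if n > 1 the connecting map is zero: every value c of a connecting cocycle vanishes
    (1 < n → ∀ (y : Fin (n + 1) → Circle1) (c : Circle1),
      swapLastS n y - y = (fun _ => c) → c = 0) ∧
    -- if n = 1 the connecting map is surjective onto H¹(ℤ/2, ℝ/ℤ) ≅ ℤ/2, the 2-torsion
    -- subgroup of ℝ/ℤ: every 2-torsion c arises from some y
    (n = 1 → ∀ c : Circle1, (2 : ℤ) • c = 0 →
      ∃ y : Fin (n + 1) → Circle1, swapLastS n y - y = fun _ => c) := by
  refine ⟨fun hn y c h => ?_, ?_⟩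
  · have hfix : Equiv.swap (⟨n - 1, by omega⟩ : Fin (n + 1)) ⟨n, by omega⟩ 0 = 0 :=
      Equiv.swap_apply_of_ne_of_ne (by simp [Fin.ext_iff]; omega) (by simp [Fin.ext_iff]; omega)
    exact eq_zero_of_comp_sub_eq_const hfix h
  · rintro rfl c hc
    exact ⟨![0, c], comp_swap_sub_eq_const_of_two_zsmul_eq_zero hc⟩

theorem stmt17 (n : ℕ) (hn : 0 < n) :
    -- if n > 1 the connecting map is zero: every value c of a connecting cocycle vanishes
    (1 < n → ∀ (y : Fin (n + 1) → Circle1) (c : Circle1),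
      swapLastS n y - y = (fun _ => c) → c = 0) ∧
    -- if n = 1 the connecting map is surjective onto H¹(ℤ/2, ℝ/ℤ) ≅ ℤ/2, the 2-torsion
    -- subgroup of ℝ/ℤ: every 2-torsion c arises from some y
    (n = 1 → ∀ c : Circle1, (2 : ℤ) • c = 0 →
      ∃ y : Fin (n + 1) → Circle1, swapLastS n y - y = fun _ => c) :=
  stmt17_general n

end
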